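/- arXiv:2309.13808 — 2 statements merged into one kernel-verified Lean document; each statement's English description precedes it below -/
import Mathlib

section
/- From any initial composite state σ₀ of the asynchronous muddy-children protocol satisfying consistent(σ₀), there exists a valid trace leading to a final composite state in which each child's status is consistent with the instance of the problem: letting M = ⋃_i Obs(σ₀_i), every child i ∈ M has status m and every child i ∉ M has status c. -/
/-! After every child has initialised, fix a muddy child `a`. If `a` is the only muddy child, it
sees no mud and is muddy at once, in round `0`. Otherwise take a second muddy child `b`: the two
see each other and each sees `|M| - 1` muddy children, so by answering each other's `u`-messages
they climb one round at a time until, in round `|M| - 1`, both conclude that they are muddy.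
The announcement `⟨a, |M| - 1, m⟩` then settles every undecided child: a muddy one sees
`|M| - 1` muddy children and concludes `m`, a clean one sees `|M|` and concludes `c`. Every
received message was emitted earlier along the same trace, so the trace is valid. -/

/-- Epistemic status of a child: unknown, muddy, or clean. -/
inductive Status : Type
  | u | m | c

/-- A message ⟨j, r, status⟩. -/
structure Msg (n : ℕ) : Type where
  sender : Fin n
  round : ℕ
  status : Status

/-- A child's state: initial ⟨Obs⟩ or running ⟨Obs, r, status⟩. -/
inductive ChildState (n : ℕ) : Type
  | start (Obs : Finset (Fin n))
  | run (Obs : Finset (Fin n)) (r : ℕ) (st : Status)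

open Status ChildState

/-- Observation set of a child state. -/
def ChildState.obs {n : ℕ} : ChildState n → Finset (Fin n)
  | .start O => O
  | .run O _ _ => O

/-- A composite state. -/
abbrev CState (n : ℕ) := Fin n → ChildState n

/-- The set M of muddy children determined by a composite state. -/
def muddySet {n : ℕ} (σ : CState n) : Finset (Fin n) :=
  Finset.univ.biUnion fun i => (σ i).obs

/-- consistent(σ): M nonempty and every child sees exactly M \ {i}. -/
def consistent {n : ℕ} (σ : CState n) : Prop :=
  (muddySet σ).Nonempty ∧ ∀ i, (σ i).obs = muddySet σ \ {i}

/-- The constrained local transitions of child `i` (labels init/emit/receive). -/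
inductive LocalStep {n : ℕ} (i : Fin n) :
    ChildState n → Option (Msg n) → ChildState n → Option (Msg n) → Prop
  | init_nonempty (O : Finset (Fin n)) (h : O ≠ ∅) :
      LocalStep i (start O) none (run O 0 u) none
  | init_empty (O : Finset (Fin n)) (h : O = ∅) :
      LocalStep i (start O) none (run O 0 m) none
  | emit (O : Finset (Fin n)) (r : ℕ) (s : Status) :
      LocalStep i (run O r s) none (run O r s) (some ⟨i, r, s⟩)
  | recv_decided (O : Finset (Fin n)) (r : ℕ) (s : Status) (mg : Msg n) (h : s ≠ u) :
      LocalStep i (run O r s) (some mg) (run O r s) none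
  | recv_c_eq (O : Finset (Fin n)) (r : ℕ) (j : Fin n) (r' : ℕ)
      (hj : j ∉ O) (hr : r' = O.card) :
      LocalStep i (run O r u) (some ⟨j, r', c⟩) (run O r' c) none
  | recv_c_succ (O : Finset (Fin n)) (r : ℕ) (j : Fin n) (r' : ℕ)
      (hj : j ∉ O) (hr : r' = O.card + 1) :
      LocalStep i (run O r u) (some ⟨j, r', c⟩) (run O (r' - 1) m) none
  | recv_m_eq (O : Finset (Fin n)) (r : ℕ) (j : Fin n) (r' : ℕ)
      (hj : j ∈ O) (hr : r' = O.card) :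
      LocalStep i (run O r u) (some ⟨j, r', m⟩) (run O r' m) none
  | recv_m_pred (O : Finset (Fin n)) (r : ℕ) (j : Fin n) (r' : ℕ)
      (hj : j ∈ O) (hr : r' = O.card - 1) :
      LocalStep i (run O r u) (some ⟨j, r', m⟩) (run O (r' + 1) c) none
  | recv_u_in_lt (O : Finset (Fin n)) (r : ℕ) (j : Fin n) (r' : ℕ)
      (hj : j ∈ O) (hr : r' < r) :
      LocalStep i (run O r u) (some ⟨j, r', u⟩) (run O r u) none
  | recv_u_in_mid (O : Finset (Fin n)) (r : ℕ) (j : Fin n) (r' : ℕ)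
      (hj : j ∈ O) (h1 : r ≤ r') (h2 : r' < O.card - 1) :
      LocalStep i (run O r u) (some ⟨j, r', u⟩) (run O (r' + 1) u) none
  | recv_u_in_top (O : Finset (Fin n)) (r : ℕ) (j : Fin n) (r' : ℕ)
      (hj : j ∈ O) (hr : r' = O.card - 1) :
      LocalStep i (run O r u) (some ⟨j, r', u⟩) (run O (r' + 1) m) none
  | recv_u_out_le (O : Finset (Fin n)) (r : ℕ) (j : Fin n) (r' : ℕ)
      (hj : j ∉ O) (hr : r' ≤ r) :
      LocalStep i (run O r u) (some ⟨j, r', u⟩) (run O r u) none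
  | recv_u_out_mid (O : Finset (Fin n)) (r : ℕ) (j : Fin n) (r' : ℕ)
      (hj : j ∉ O) (h1 : r < r') (h2 : r' < O.card) :
      LocalStep i (run O r u) (some ⟨j, r', u⟩) (run O r' u) none
  | recv_u_out_top (O : Finset (Fin n)) (r : ℕ) (j : Fin n) (r' : ℕ)
      (hj : j ∉ O) (hr : r' = O.card) :
      LocalStep i (run O r u) (some ⟨j, r', u⟩) (run O r' m) none

/-- The no-equivocation condition on an input message: the sender must be in a
running state matching the message (or a state strictly ahead of an unknown-status message). -/
def senderOK {n : ℕ} (σ : CState n) (mg : Msg n) : Prop :=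
  ∃ (O : Finset (Fin n)) (rj : ℕ) (sj : Status),
    σ mg.sender = run O rj sj ∧
      ((mg.status = sj ∧ mg.round = rj) ∨ (mg.status = u ∧ mg.round < rj))

/-- The composition constraint: init transitions require consistency of the
composite state, receives require the no-equivocation condition. -/
def stepConstraint {n : ℕ} (σ : CState n) (i : Fin n) (inp : Option (Msg n)) : Prop :=
  ((∃ O, σ i = start O) → consistent σ) ∧ ∀ mg, inp = some mg → senderOK σ mg

/-- Constrained transitions of the composite system: component `i` takes a local
transition, subject to the composition constraint. -/
inductive CStep {n : ℕ} :
    CState n → Fin n → Option (Msg n) → CState n → Option (Msg n) → Prop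
  | mk (σ : CState n) (i : Fin n) (inp : Option (Msg n)) (s' : ChildState n)
      (out : Option (Msg n))
      (hl : LocalStep i (σ i) inp s' out) (hc : stepConstraint σ i inp) :
      CStep σ i inp (Function.update σ i s') out

/-- A recorded transition: acting component, input message, output message. -/
abbrev Transition (n : ℕ) := Fin n × Option (Msg n) × Option (Msg n)

/-- A composite state is initial when all components are in initial states. -/
def isInitial {n : ℕ} (σ : CState n) : Prop := ∀ i, ∃ O, σ i = start O

/-- The trace `tr` emits the message `mg`. -/
def emits {n : ℕ} (tr : List (Transition n)) (mg : Msg n) : Prop :=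
  ∃ i inp, (i, inp, some mg) ∈ tr

/-- The message `mg` is an input of some transition of the trace `tr`. -/
def isInput {n : ℕ} (tr : List (Transition n)) (mg : Msg n) : Prop :=
  ∃ i out, (i, some mg, out) ∈ tr

/-- Constrained traces: sequences of constrained transitions from `σ0`. -/
inductive ConstrainedTrace {n : ℕ} (σ0 : CState n) :
    List (Transition n) → CState n → Prop
  | nil : ConstrainedTrace σ0 [] σ0
  | snoc (tr : List (Transition n)) (σ : CState n) (i : Fin n)
      (inp : Option (Msg n)) (σ' : CState n) (out : Option (Msg n))
      (htr : ConstrainedTrace σ0 tr σ)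
      (hstep : CStep σ i inp σ' out) :
      ConstrainedTrace σ0 (tr ++ [(i, inp, out)]) σ'

/-- Valid messages from the initial composite state `σ0`: messages emitted by a
constrained trace from `σ0` all of whose input messages are themselves valid,
i.e., emitted by valid traces from `σ0`. -/
inductive ValidMsg {n : ℕ} (σ0 : CState n) : Msg n → Prop
  | intro (mg : Msg n) (tr : List (Transition n)) (σ : CState n)
      (h0 : isInitial σ0)
      (hct : ConstrainedTrace σ0 tr σ)
      (hin : ∀ mg', isInput tr mg' → ValidMsg σ0 mg')
      (hem : emits tr mg) : ValidMsg σ0 mg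

/-- Valid traces from `σ0`: constrained traces from an initial composite state
in which every input message can be emitted by some valid trace from `σ0`. -/
def ValidTrace {n : ℕ} (σ0 : CState n) (tr : List (Transition n)) (σ : CState n) : Prop :=
  isInitial σ0 ∧ ConstrainedTrace σ0 tr σ ∧ ∀ mg, isInput tr mg → ValidMsg σ0 mg

/-- Status of a running child state. -/
def ChildState.status? {n : ℕ} : ChildState n → Option Status
  | .start _ => none
  | .run _ _ s => some s

/-- A composite state is final when every component knows its status. -/
def isFinal {n : ℕ} (σ : CState n) : Prop :=
  ∀ i, ∃ (O : Finset (Fin n)) (r : ℕ) (s : Status), σ i = run O r s ∧ s ≠ u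

/-- Round of a child state, with initial states at round -1. -/
def roundZ {n : ℕ} : ChildState n → ℤ
  | .start _ => -1
  | .run _ r _ => (r : ℤ)

open Function

variable {n : ℕ} {σ0 σ : CState n}

def Reachable (σ0 σ : CState n) : Prop :=
  ∃ tr, ConstrainedTrace σ0 tr σ ∧ ∀ mg, isInput tr mg → ValidMsg σ0 mg

theorem Reachable.refl (σ0 : CState n) : Reachable σ0 σ0 :=
  ⟨[], .nil, fun _ ⟨_, _, h⟩ => absurd h List.not_mem_nil⟩

theorem Reachable.step {i : Fin n} {inp out : Option (Msg n)} {s' : ChildState n}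
    (h : Reachable σ0 σ) (hl : LocalStep i (σ i) inp s' out) (hc : stepConstraint σ i inp)
    (hin : ∀ mg, inp = some mg → ValidMsg σ0 mg) : Reachable σ0 (update σ i s') := by
  obtain ⟨tr, htr, htr_in⟩ := h
  refine ⟨tr ++ [(i, inp, out)], .snoc tr σ i inp _ out htr (.mk σ i inp s' out hl hc), ?_⟩
  rintro mg ⟨j, o, hmem⟩
  rcases List.mem_append.1 hmem with hmem | hmem
  · exact htr_in mg ⟨j, o, hmem⟩
  · exact hin mg (Prod.mk.inj (Prod.mk.inj (List.mem_singleton.1 hmem)).2).1.symm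

theorem Reachable.validMsg (h0 : isInitial σ0) (h : Reachable σ0 σ) {i : Fin n}
    {O : Finset (Fin n)} {r : ℕ} {s : Status} (hi : σ i = run O r s) :
    ValidMsg σ0 ⟨i, r, s⟩ := by
  obtain ⟨tr, htr, hin⟩ := h
  have hstep : CStep σ i none σ (some ⟨i, r, s⟩) := by
    have hl : LocalStep i (σ i) none (σ i) (some ⟨i, r, s⟩) := hi ▸ LocalStep.emit O r s
    simpa using CStep.mk σ i none (σ i) _ hl ⟨fun ⟨_, h⟩ => by simp [hi] at h, by simp⟩
  refine .intro _ _ σ h0 (.snoc tr σ i none σ _ htr hstep) ?_ ⟨i, none, by simp⟩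
  rintro mg ⟨j, o, hmem⟩
  simp only [List.mem_append, List.mem_singleton, Prod.mk.injEq, reduceCtorEq, and_false,
    false_and, or_false] at hmem
  exact hin mg ⟨j, o, hmem⟩

theorem LocalStep.not_start_of_receive {i : Fin n} {O : Finset (Fin n)} {mg : Msg n}
    {s' : ChildState n} {out : Option (Msg n)} : ¬ LocalStep i (start O) (some mg) s' out := by
  rintro ⟨⟩

theorem Reachable.receive {i : Fin n} {mg : Msg n} {s' : ChildState n}
    (h : Reachable σ0 σ) (hl : LocalStep i (σ i) (some mg) s' none) (hv : ValidMsg σ0 mg)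
    (hs : senderOK σ mg) : Reachable σ0 (update σ i s') := by
  refine h.step hl ⟨?_, fun _ hmg => Option.some_inj.1 hmg ▸ hs⟩ fun _ hmg => ?_
  · rintro ⟨O, hO⟩
    exact absurd (hO ▸ hl) LocalStep.not_start_of_receive
  · exact Option.some_inj.1 hmg ▸ hv

theorem Reachable.receive_current (h0 : isInitial σ0) (h : Reachable σ0 σ) {i j : Fin n}
    {O : Finset (Fin n)} {r : ℕ} {s : Status} {s' : ChildState n} (hj : σ j = run O r s)
    (hl : LocalStep i (σ i) (some ⟨j, r, s⟩) s' none) : Reachable σ0 (update σ i s') :=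
  h.receive hl (h.validMsg h0 hj) ⟨O, r, s, hj, .inl ⟨rfl, rfl⟩⟩

theorem LocalStep.obs_eq {i : Fin n} {s s' : ChildState n} {inp out : Option (Msg n)}
    (h : LocalStep i s inp s' out) : s'.obs = s.obs := by
  cases h <;> rfl

theorem Reachable.obs_eq (h : Reachable σ0 σ) (i : Fin n) : (σ i).obs = (σ0 i).obs := by
  obtain ⟨tr, htr, -⟩ := h
  induction htr with
  | nil => rfl
  | snoc _ _ k _ _ _ _ hstep ih =>
    cases hstep with
    | mk _ _ hl _ =>
      rcases eq_or_ne i k with rfl | hik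
      · rw [update_self, hl.obs_eq, ih]
      · rw [update_of_ne hik, ih]

theorem consistent_of_obs_eq {τ : CState n} (h : ∀ i, (σ i).obs = (τ i).obs)
    (hc : consistent τ) : consistent σ := by
  have hM : muddySet σ = muddySet τ := by simp only [muddySet, h]
  exact ⟨hM ▸ hc.1, fun i => by rw [h, hM, hc.2]⟩

theorem Reachable.of_piecewise {f g : CState n} (hg : Reachable σ0 g)
    (hstep : ∀ (S : Finset (Fin n)) (j : Fin n), j ∉ S → Reachable σ0 (S.piecewise f g) →
      Reachable σ0 (update (S.piecewise f g) j (f j))) :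
    Reachable σ0 f := by
  have hS : ∀ S : Finset (Fin n), Reachable σ0 (S.piecewise f g) := by
    intro S
    induction S using Finset.induction_on with
    | empty => simpa using hg
    | insert j S hj ih => rw [Finset.piecewise_insert]; exact hstep S j hj ih
  simpa using hS Finset.univ

theorem eq_start_of_consistent (h0 : isInitial σ0) (hc : consistent σ0) (i : Fin n) :
    σ0 i = start (muddySet σ0 \ {i}) := by
  obtain ⟨O, hO⟩ := h0 i
  rw [hO, ← hc.2 i, hO, ChildState.obs]

def initialized (O : Finset (Fin n)) : ChildState n :=
  run O 0 (if O = ∅ then m else u)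

theorem LocalStep.start_initialized (i : Fin n) (O : Finset (Fin n)) :
    LocalStep i (start O) none (initialized O) none := by
  unfold initialized
  split_ifs with hO
  exacts [.init_empty O hO, .init_nonempty O hO]

theorem reachable_initialized (h0 : isInitial σ0) (hc : consistent σ0) :
    Reachable σ0 (fun i => initialized (muddySet σ0 \ {i})) := by
  refine (Reachable.refl σ0).of_piecewise fun S j hj hS =>
    hS.step (inp := none) (out := none) ?_ ⟨?_, ?_⟩ ?_
  · rw [Finset.piecewise_eq_of_notMem _ _ _ hj, eq_start_of_consistent h0 hc j]
    exact .start_initialized j _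
  · exact fun _ => consistent_of_obs_eq hS.obs_eq hc
  · simp
  · simp

theorem LocalStep.recv_u_in_advance {i j : Fin n} {O : Finset (Fin n)} {r r' : ℕ} (hj : j ∈ O)
    (hr : r ≤ r') (hr' : r' < O.card) :
    LocalStep i (run O r u) (some ⟨j, r', u⟩)
      (run O (r' + 1) (if r' + 1 < O.card then u else m)) none := by
  split_ifs with h
  · exact .recv_u_in_mid O r j r' hj hr (by omega)
  · exact .recv_u_in_top O r j r' hj (by omega)

/-- `a` can still receive `b`'s round-`r` message after `b` has answered `a`, because `b` is
then strictly ahead of it. -/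
theorem Reachable.exchange_round (h0 : isInitial σ0) (h : Reachable σ0 σ) {a b : Fin n}
    (hab : a ≠ b) {Oa Ob : Finset (Fin n)} {r : ℕ} (ha : σ a = run Oa r u)
    (hb : σ b = run Ob r u) (haOb : a ∈ Ob) (hbOa : b ∈ Oa) (hra : r < Oa.card)
    (hrb : r < Ob.card) :
    Reachable σ0 (update (update σ b (run Ob (r + 1) (if r + 1 < Ob.card then u else m))) a
      (run Oa (r + 1) (if r + 1 < Oa.card then u else m))) := by
  have hb_recv := h.receive_current h0 ha (hb ▸ LocalStep.recv_u_in_advance haOb le_rfl hrb)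
  refine hb_recv.receive ?_ (h.validMsg h0 hb)
    ⟨Ob, r + 1, _, update_self .., .inr ⟨rfl, lt_add_one r⟩⟩
  rw [update_of_ne hab, ha]
  exact .recv_u_in_advance hbOa le_rfl hra

theorem Reachable.exists_pair_muddy (h0 : isInitial σ0) (h : Reachable σ0 σ) {a b : Fin n}
    (hab : a ≠ b) {Oa Ob : Finset (Fin n)} (ha : σ a = run Oa 0 u) (hb : σ b = run Ob 0 u)
    (haOb : a ∈ Ob) (hbOa : b ∈ Oa) (hcard : Oa.card = Ob.card) :
    ∃ τ, Reachable σ0 τ ∧ τ a = run Oa Oa.card m ∧ τ b = run Ob Ob.card m ∧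
      ∀ i, i ≠ a → i ≠ b → τ i = σ i := by
  set K := Oa.card
  have hK : 0 < K := Finset.card_pos.2 ⟨b, hbOa⟩
  have climb : ∀ r ≤ K, ∃ τ, Reachable σ0 τ ∧ τ a = run Oa r (if r < K then u else m) ∧
      τ b = run Ob r (if r < K then u else m) ∧ ∀ i, i ≠ a → i ≠ b → τ i = σ i := by
    intro r
    induction r with
    | zero => exact fun _ => ⟨σ, h, by simp [ha, hK], by simp [hb, hK], fun _ _ _ => rfl⟩
    | succ r ih =>
      intro hr
      obtain ⟨τ, hτ, hτa, hτb, hτi⟩ := ih (by omega)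
      rw [if_pos (by omega)] at hτa hτb
      refine ⟨_, hτ.exchange_round h0 hab hτa hτb haOb hbOa (by omega) (by omega), ?_, ?_, ?_⟩
      · rw [update_self]
      · rw [update_of_ne hab.symm, update_self, hcard]
      · intro i hia hib
        rw [update_of_ne hia, update_of_ne hib, hτi i hia hib]
  obtain ⟨τ, hτ, hτa, hτb, hτi⟩ := climb K le_rfl
  rw [if_neg (lt_irrefl K)] at hτa hτb
  exact ⟨τ, hτ, hτa, hcard ▸ hτb, hτi⟩

theorem card_sdiff_singleton_of_mem {α : Type*} [DecidableEq α] {M : Finset α} {i : α}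
    (hi : i ∈ M) :
    (M \ {i}).card = M.card - 1 := by
  rw [Finset.sdiff_singleton_eq_erase, Finset.card_erase_of_mem hi]

def verdict (M : Finset (Fin n)) (i : Fin n) : ChildState n :=
  run (M \ {i}) (if i ∈ M then M.card - 1 else M.card) (if i ∈ M then m else c)

theorem verdict_of_mem {M : Finset (Fin n)} {i : Fin n} (hi : i ∈ M) :
    verdict M i = run (M \ {i}) (M \ {i}).card m := by
  rw [verdict, if_pos hi, if_pos hi, card_sdiff_singleton_of_mem hi]

theorem LocalStep.verdict_of_announcement {M : Finset (Fin n)} {a j : Fin n} (ha : a ∈ M)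
    (hja : j ≠ a) (r : ℕ) :
    LocalStep j (run (M \ {j}) r u) (some ⟨a, M.card - 1, m⟩) (verdict M j) none := by
  have haj : a ∈ M \ {j} := by simp [ha, hja.symm]
  by_cases hj : j ∈ M
  · have hcard := card_sdiff_singleton_of_mem hj
    rw [verdict_of_mem hj, hcard]
    exact .recv_m_eq _ r a _ haj hcard.symm
  · have hM : M \ {j} = M := by
      rw [Finset.sdiff_singleton_eq_erase, Finset.erase_eq_of_notMem hj]
    have hpos : 0 < M.card := Finset.card_pos.2 ⟨a, ha⟩
    have hl := LocalStep.recv_m_pred (i := j) (M \ {j}) r a (M.card - 1) haj (by rw [hM])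
    rw [Nat.sub_add_cancel hpos] at hl
    rwa [verdict, if_neg hj, if_neg hj]

theorem LocalStep.verdict_stays (M : Finset (Fin n)) (j : Fin n) (mg : Msg n) :
    LocalStep j (verdict M j) (some mg) (verdict M j) none :=
  .recv_decided _ _ _ mg (by split_ifs <;> simp)

theorem Reachable.verdict_of_announcer (h0 : isInitial σ0) {M : Finset (Fin n)} {a : Fin n}
    (ha : a ∈ M) (h : Reachable σ0 σ) (hσa : σ a = verdict M a)
    (hσ : ∀ j, σ j = verdict M j ∨ ∃ r, σ j = run (M \ {j}) r u) :
    Reachable σ0 (verdict M) := by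
  refine h.of_piecewise fun S j hj hS => ?_
  have hSa : S.piecewise (verdict M) σ a = run (M \ {a}) (M.card - 1) m := by
    by_cases haS : a ∈ S <;> simp [haS, hσa, verdict, ha]
  refine hS.receive_current h0 hSa ?_
  rw [Finset.piecewise_eq_of_notMem _ _ _ hj]
  rcases hσ j with hσj | ⟨r, hσj⟩
  · exact hσj ▸ .verdict_stays M j _
  · have hja : j ≠ a := by
      rintro rfl
      simp [hσa, verdict, ha] at hσj
    exact hσj ▸ .verdict_of_announcement ha hja r

theorem initialized_sdiff_of_mem {M : Finset (Fin n)} {x j : Fin n} (hx : x ∈ M)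
    (hjx : j ≠ x) :
    initialized (M \ {j}) = run (M \ {j}) 0 u := by
  rw [initialized, if_neg (Finset.ne_empty_of_mem (a := x) (by simp [hx, hjx.symm]))]

theorem exists_reachable_announcer (h0 : isInitial σ0) (hc : consistent σ0) {a : Fin n}
    (ha : a ∈ muddySet σ0) :
    ∃ σ, Reachable σ0 σ ∧ σ a = verdict (muddySet σ0) a ∧
      ∀ j, σ j = verdict (muddySet σ0) j ∨ ∃ r, σ j = run (muddySet σ0 \ {j}) r u := by
  set M := muddySet σ0
  have hinit := reachable_initialized h0 hc
  by_cases hsingle : ∃ b ∈ M, b ≠ a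
  · obtain ⟨b, hb, hba⟩ := hsingle
    obtain ⟨τ, hτ, hτa, hτb, hτi⟩ := hinit.exists_pair_muddy h0 hba.symm
      (initialized_sdiff_of_mem hb hba.symm) (initialized_sdiff_of_mem ha hba)
      (Finset.mem_sdiff.2 ⟨ha, Finset.notMem_singleton.2 hba.symm⟩)
      (Finset.mem_sdiff.2 ⟨hb, Finset.notMem_singleton.2 hba⟩)
      (by rw [card_sdiff_singleton_of_mem ha, card_sdiff_singleton_of_mem hb])
    refine ⟨τ, hτ, hτa.trans (verdict_of_mem ha).symm, fun j => ?_⟩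
    by_cases hja : j = a
    · exact .inl (hja ▸ hτa.trans (verdict_of_mem ha).symm)
    by_cases hjb : j = b
    · exact .inl (hjb ▸ hτb.trans (verdict_of_mem hb).symm)
    exact .inr ⟨0, (hτi j hja hjb).trans (initialized_sdiff_of_mem ha hja)⟩
  · have hMa : M \ {a} = ∅ :=
      Finset.eq_empty_of_forall_notMem fun x hx => hsingle ⟨x, by simpa using hx⟩
    have hσa : initialized (M \ {a}) = verdict M a := by
      rw [verdict_of_mem ha, initialized, if_pos hMa, hMa, Finset.card_empty]
    refine ⟨_, hinit, hσa, fun j => ?_⟩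
    by_cases hja : j = a
    · exact .inl (hja ▸ hσa)
    · exact .inr ⟨0, initialized_sdiff_of_mem ha hja⟩

theorem muddy_reaches_correct_final_state_general (n : ℕ)
    (σ0 : CState n) (h0 : isInitial σ0) (hc : consistent σ0) :
    ∃ (tr : List (Transition n)) (σ : CState n),
      ValidTrace σ0 tr σ ∧
      ∀ i : Fin n, ∃ (O : Finset (Fin n)) (r : ℕ),
        σ i = ChildState.run O r
          (if i ∈ muddySet σ0 then Status.m else Status.c) := by
  obtain ⟨a, ha⟩ := hc.1
  obtain ⟨σ, hσ, hσa, hσ_rest⟩ := exists_reachable_announcer h0 hc ha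
  obtain ⟨tr, htr, hin⟩ := hσ.verdict_of_announcer h0 ha hσa hσ_rest
  exact ⟨tr, _, ⟨h0, htr, hin⟩, fun i => ⟨_, _, rfl⟩⟩

/-- From any consistent initial composite state there is a valid trace leading
to a final composite state in which every muddy child has status m and every
clean child has status c. -/
theorem muddy_reaches_correct_final_state (n : ℕ) (hn : 1 ≤ n)
    (σ0 : CState n) (h0 : isInitial σ0) (hc : consistent σ0) :
    ∃ (tr : List (Transition n)) (σ : CState n),
      ValidTrace σ0 tr σ ∧
      ∀ i : Fin n, ∃ (O : Finset (Fin n)) (r : ℕ),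
        σ i = ChildState.run O r
          (if i ∈ muddySet σ0 then Status.m else Status.c) :=
  muddy_reaches_correct_final_state_general n σ0 h0 hc
end

section
/- (Information leak) Consider the asynchronous muddy-children protocol with n = 5 children where children 1, 2, 3, 4 are muddy and child 5 is clean (i.e., the initial state has Obs_1 = {2,3,4}, Obs_2 = {1,3,4}, Obs_3 = {1,2,4}, Obs_4 = {1,2,3}, Obs_5 = {1,2,3,4}). There exists a valid trace from this initial state in which only components 1 and 5 perform transitions, every message received by child 1 was emitted by child 5 and every message received by child 5 was emitted by child 1, and whose final composite state has child 1 in status m (child 1 knows they are muddy). -/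
open Status ChildState

/-- The initial composite state with five children in which children
1, 2, 3, 4 (indices 0, 1, 2, 3) are muddy and child 5 (index 4) is clean:
each child sees exactly the other muddy children. -/
def leakInit : CState 5 :=
  fun i => ChildState.start (({0, 1, 2, 3} : Finset (Fin 5)) \ {i})


/-! A muddy child `i` and a clean child `j` can run the protocol on their own. Child `j` sees `i`
as muddy, so a `u`-message of `i` at round `k` moves `j` to round `k + 1`; child `i` sees `j` as
clean, so `j`'s answer at round `k + 1` moves `i` to round `k + 1`. Since `j` sees one more muddy
child than `i`, it never decides first, and after `|Obs_i|` exchanges child `i` reaches round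
`|Obs_i|` and concludes that it is muddy, although nobody else has taken part. -/

section Protocol

variable {n : ℕ} {σ0 σ : CState n} {tr : List (Transition n)} {i j : Fin n}

lemma muddySet_congr {τ : CState n} (h : ∀ k, (σ k).obs = (τ k).obs) :
    muddySet σ = muddySet τ := by
  simp only [muddySet, h]

lemma consistent_congr {τ : CState n} (h : ∀ k, (σ k).obs = (τ k).obs) :
    consistent σ ↔ consistent τ := by
  simp only [consistent, muddySet_congr h, h]

lemma stepConstraint_of_eq_run {O : Finset (Fin n)} {r : ℕ} {s : Status}
    {inp : Option (Msg n)} (hσi : σ i = run O r s)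
    (hsender : ∀ mg, inp = some mg → senderOK σ mg) : stepConstraint σ i inp :=
  ⟨fun ⟨_, h⟩ => by simp [hσi] at h, hsender⟩

lemma ValidTrace.nil (h0 : isInitial σ0) : ValidTrace σ0 [] σ0 :=
  ⟨h0, ConstrainedTrace.nil, fun _ ⟨_, _, h⟩ => by simp at h⟩

lemma ValidTrace.validMsg_of_emits (hv : ValidTrace σ0 tr σ) {mg : Msg n}
    (hmg : emits tr mg) : ValidMsg σ0 mg :=
  .intro mg tr σ hv.1 hv.2.1 hv.2.2 hmg

lemma ValidTrace.snoc (hv : ValidTrace σ0 tr σ) {inp out : Option (Msg n)}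
    {s' : ChildState n} (hl : LocalStep i (σ i) inp s' out) (hc : stepConstraint σ i inp)
    (hinp : ∀ mg, inp = some mg → emits tr mg) :
    ValidTrace σ0 (tr ++ [(i, inp, out)]) (Function.update σ i s') := by
  refine ⟨hv.1, .snoc _ _ _ _ _ _ hv.2.1 (.mk _ _ _ _ _ hl hc), ?_⟩
  rintro mg ⟨k, out', hmem⟩
  rcases List.mem_append.1 hmem with hmem | hmem
  · exact hv.2.2 mg ⟨k, out', hmem⟩
  · simp only [List.mem_singleton, Prod.mk.injEq] at hmem
    obtain ⟨-, rfl, -⟩ := hmem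
    exact hv.validMsg_of_emits (hinp mg rfl)

lemma ValidTrace.init (hv : ValidTrace σ0 tr σ) {O : Finset (Fin n)} (hσi : σ i = start O)
    (hO : O.Nonempty) (hc : consistent σ) :
    ValidTrace σ0 (tr ++ [(i, none, none)]) (Function.update σ i (run O 0 u)) := by
  refine hv.snoc ?_ ⟨fun _ => hc, fun _ h => nomatch h⟩ fun _ h => nomatch h
  rw [hσi]
  exact .init_nonempty O hO.ne_empty

lemma ValidTrace.emit (hv : ValidTrace σ0 tr σ) {O : Finset (Fin n)} {r : ℕ} {s : Status}
    (hσi : σ i = run O r s) : ValidTrace σ0 (tr ++ [(i, none, some ⟨i, r, s⟩)]) σ := by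
  have hl : LocalStep i (σ i) none (run O r s) (some ⟨i, r, s⟩) := by
    rw [hσi]
    exact .emit O r s
  have hv' :=
    hv.snoc hl (stepConstraint_of_eq_run hσi fun _ h => nomatch h) fun _ h => nomatch h
  rwa [← hσi, Function.update_eq_self] at hv'

lemma ValidTrace.receive (hv : ValidTrace σ0 tr σ) {mg : Msg n} {O O' : Finset (Fin n)}
    {r : ℕ} {s : Status} {s' : ChildState n} (hmg : emits tr mg)
    (hsender : σ mg.sender = run O' mg.round mg.status) (hσi : σ i = run O r s)
    (hl : LocalStep i (run O r s) (some mg) s' none) :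
    ValidTrace σ0 (tr ++ [(i, some mg, none)]) (Function.update σ i s') :=
  hv.snoc (hσi ▸ hl)
    (stepConstraint_of_eq_run hσi fun _ h => by
      cases h
      exact ⟨O', _, _, hsender, .inl ⟨rfl, rfl⟩⟩)
    fun _ h => by cases h; exact hmg

def exchange (i j : Fin n) (k : ℕ) : List (Transition n) :=
  [(i, none, some ⟨i, k, u⟩), (j, some ⟨i, k, u⟩, none),
    (j, none, some ⟨j, k + 1, u⟩), (i, some ⟨j, k + 1, u⟩, none)]

def dialogue (i j : Fin n) (K : ℕ) : List (Transition n) :=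
  [(i, none, none), (j, none, none)] ++ (List.range K).flatMap (exchange i j)

lemma emits_append_singleton {t : Transition n} {mg : Msg n} (h : t.2.2 = some mg) :
    emits (tr ++ [t]) mg :=
  ⟨t.1, t.2.1, by obtain ⟨_, _, _⟩ := t; cases h; simp⟩

lemma ValidTrace.append_exchange (hv : ValidTrace σ0 tr σ) (hij : i ≠ j)
    {Oi Oj : Finset (Fin n)} {k : ℕ} {s : ChildState n}
    (hσi : σ i = run Oi k u) (hσj : σ j = run Oj k u)
    (hiOj : i ∈ Oj) (hk : k < Oj.card - 1)
    (hrecv : LocalStep i (run Oi k u) (some ⟨j, k + 1, u⟩) s none) :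
    ValidTrace σ0 (tr ++ exchange i j k)
      (Function.update (Function.update σ j (run Oj (k + 1) u)) i s) := by
  have h1 := hv.emit hσi
  have h2 := h1.receive (emits_append_singleton rfl) hσi hσj
    (.recv_u_in_mid Oj k i k hiOj le_rfl hk)
  have h3 := h2.emit (Function.update_self ..)
  have h4 := h3.receive (emits_append_singleton rfl) (Function.update_self ..)
    (by rwa [Function.update_of_ne hij]) hrecv
  simpa [exchange] using h4

lemma ValidTrace.dialogue_prefix (hv : ValidTrace σ0 [(i, none, none), (j, none, none)] σ)
    (hij : i ≠ j) {Oi Oj : Finset (Fin n)} (hσi : σ i = run Oi 0 u) (hσj : σ j = run Oj 0 u)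
    (hiOj : i ∈ Oj) (hjOi : j ∉ Oi) (hcard : Oi.card < Oj.card) :
    ∀ k < Oi.card, ∃ σ', ValidTrace σ0 (dialogue i j k) σ' ∧
      σ' i = run Oi k u ∧ σ' j = run Oj k u
  | 0, _ => ⟨σ, by simpa [dialogue] using hv, hσi, hσj⟩
  | k + 1, hk => by
    obtain ⟨σ', hv', hσ'i, hσ'j⟩ :=
      hv.dialogue_prefix hij hσi hσj hiOj hjOi hcard k (by omega)
    have hv'' := hv'.append_exchange hij hσ'i hσ'j hiOj (by omega)
      (.recv_u_out_mid Oi k j (k + 1) hjOi (by omega) hk)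
    exact ⟨_, by simpa [dialogue, List.range_succ] using hv'', by simp,
      by simp [Function.update_of_ne hij.symm]⟩

lemma exists_validTrace_dialogue (h0 : isInitial σ0) (hc : consistent σ0) (hij : i ≠ j)
    {Oi Oj : Finset (Fin n)} (hσi : σ0 i = start Oi) (hσj : σ0 j = start Oj)
    (hiOj : i ∈ Oj) (hjOi : j ∉ Oi) (hOi : Oi.Nonempty) (hcard : Oi.card < Oj.card) :
    ∃ σ, ValidTrace σ0 (dialogue i j Oi.card) σ ∧ σ i = run Oi Oi.card m := by
  have hv₁ := (ValidTrace.nil h0).init hσi hOi hc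
  have hc₁ : consistent (Function.update σ0 i (run Oi 0 u)) := by
    refine (consistent_congr fun x => ?_).2 hc
    rcases eq_or_ne x i with rfl | hx
    · simp [hσi, ChildState.obs]
    · simp [hx]
  have hv₂ := hv₁.init (by rwa [Function.update_of_ne hij.symm]) ⟨i, hiOj⟩ hc₁
  obtain ⟨K, hK⟩ := Nat.exists_eq_add_one_of_ne_zero hOi.card_pos.ne'
  obtain ⟨σ, hv, hσi', hσj'⟩ := ValidTrace.dialogue_prefix (by simpa using hv₂) hij
    (by simp [Function.update_of_ne hij]) (by simp) hiOj hjOi hcard K (by omega)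
  have hv' := hv.append_exchange hij hσi' hσj' hiOj (by omega)
    (.recv_u_out_top Oi K j (K + 1) hjOi hK.symm)
  exact ⟨_, by simpa [hK, dialogue, List.range_succ] using hv', by simp [hK]⟩

lemma obs_eq_erase_of_consistent (hc : consistent σ0) {O : Finset (Fin n)}
    (hσi : σ0 i = start O) : O = (muddySet σ0).erase i := by
  simpa [hσi, ChildState.obs, Finset.sdiff_singleton_eq_erase] using hc.2 i

theorem exists_validTrace_dialogue_of_consistent (h0 : isInitial σ0) (hc : consistent σ0)
    (hi : i ∈ muddySet σ0) (hj : j ∉ muddySet σ0) (hN : 1 < (muddySet σ0).card) :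
    ∃ σ, ValidTrace σ0 (dialogue i j ((muddySet σ0).card - 1)) σ ∧
      ∃ (O : Finset (Fin n)) (r : ℕ), σ i = run O r m := by
  obtain ⟨Oi, hσi⟩ := h0 i
  obtain ⟨Oj, hσj⟩ := h0 j
  have hij : i ≠ j := ne_of_mem_of_not_mem hi hj
  have hOi := obs_eq_erase_of_consistent hc hσi
  have hOj : Oj = muddySet σ0 := by
    rw [obs_eq_erase_of_consistent hc hσj, Finset.erase_eq_of_notMem hj]
  have hcard : Oi.card = (muddySet σ0).card - 1 := by
    rw [hOi, Finset.card_erase_of_mem hi]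
  obtain ⟨σ, hv, hσ⟩ := exists_validTrace_dialogue h0 hc hij hσi hσj (hOj ▸ hi)
    (by simp [hOi, hj]) (Finset.card_pos.1 (by omega)) (by rw [hcard, hOj]; omega)
  exact ⟨σ, hcard ▸ hv, _, _, hσ⟩

lemma actor_of_mem_dialogue {K : ℕ} {t : Transition n} (ht : t ∈ dialogue i j K) :
    t.1 = i ∨ t.1 = j := by
  simp only [dialogue, exchange, List.mem_append, List.mem_flatMap] at ht
  aesop

lemma sender_of_mem_dialogue (hij : i ≠ j) {K : ℕ} {t : Transition n} {mg : Msg n}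
    (ht : t ∈ dialogue i j K) (hmg : t.2.1 = some mg) :
    (t.1 = i → mg.sender = j) ∧ (t.1 = j → mg.sender = i) := by
  simp only [dialogue, exchange, List.mem_append, List.mem_flatMap] at ht
  aesop

end Protocol

/-- Information leak: with four muddy children (1,2,3,4) and one clean child
(5), there is a valid trace in which only children 1 and 5 act, child 1 only
receives messages sent by child 5 and child 5 only receives messages sent by
child 1, and at the end child 1 knows they are muddy. -/
theorem muddy_information_leak :
    ∃ (tr : List (Transition 5)) (σ : CState 5),
      ValidTrace leakInit tr σ ∧
      (∀ t ∈ tr, t.1 = (0 : Fin 5) ∨ t.1 = (4 : Fin 5)) ∧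
      (∀ t ∈ tr, ∀ mg : Msg 5, t.2.1 = some mg →
        (t.1 = (0 : Fin 5) → mg.sender = (4 : Fin 5)) ∧
        (t.1 = (4 : Fin 5) → mg.sender = (0 : Fin 5))) ∧
      (∃ (O : Finset (Fin 5)) (r : ℕ),
        σ (0 : Fin 5) = ChildState.run O r Status.m) := by
  have hc : consistent leakInit := ⟨⟨0, by decide⟩, by decide⟩
  obtain ⟨σ, hv, hσ⟩ := exists_validTrace_dialogue_of_consistent (i := 0) (j := 4)
    (fun _ => ⟨_, rfl⟩) hc (by decide) (by decide) (by decide)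
  exact ⟨_, σ, hv, fun t ht => actor_of_mem_dialogue ht,
    fun t ht mg hmg => sender_of_mem_dialogue (by decide) ht hmg, hσ⟩
end
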